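/- For a prime p and integer l with 1 ≤ l ≤ p-1, the identity (z+1)_{p-l}/((2z+1)_{p-l}) = ((z^{p-1}-1)/((2z)^{p-1}-1))·((2z-l+1)_{l-1}/((z-l+1)_{l-1})) holds in the field of rational functions 𝔽_p(z), where (a)_n is the rising factorial. -/

import Mathlib

/-!
In characteristic `p` we have `(x)_p = ∏_{a ∈ 𝔽_p} (x + a) = x^p - x`, hence
`(x + 1)_{p-1} = x^{p-1} - 1`. Splitting these `p - 1` factors after the first `p - l` and using
`p = 0` gives `(x + 1)_{p-l} · (x - l + 1)_{l-1} = x^{p-1} - 1`; the identity is the quotient of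
the instances `x = z` and `x = 2z`.
-/

open Polynomial Finset

theorem FiniteField.prod_X_sub_C_eq_X_pow_card_sub_X (K : Type*) [Field K] [Fintype K] :
    ∏ a : K, (X - C a) = X ^ Fintype.card K - X := by
  have hmonic : (X ^ Fintype.card K - X : K[X]).Monic :=
    monic_X_pow_sub (by rw [degree_X]; exact_mod_cast Fintype.one_lt_card)
  have hroots := FiniteField.roots_X_pow_card_sub_X K
  have := prod_multiset_X_sub_C_of_monic_of_roots_card_eq hmonic (by
    rw [hroots, FiniteField.X_pow_card_sub_X_natDegree_eq K Fintype.one_lt_card]; rfl)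
  rwa [hroots] at this

theorem ascPochhammer_eq_prod_range (S : Type*) [CommSemiring S] (n : ℕ) :
    ascPochhammer S n = ∏ i ∈ range n, (X + (i : S[X])) := by
  induction n with
  | zero => simp
  | succ n ih => rw [ascPochhammer_succ_right, ih, prod_range_succ]

theorem ZMod.ascPochhammer_eq_X_pow_sub_X (p : ℕ) [Fact p.Prime] :
    ascPochhammer (ZMod p) p = X ^ p - X := by
  have hneg : ∏ a : ZMod p, (X + C a) = ∏ a : ZMod p, (X - C a) :=
    Fintype.prod_equiv (Equiv.neg (ZMod p)) _ _ (fun a => by simp [sub_eq_add_neg])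
  have hprod := FiniteField.prod_X_sub_C_eq_X_pow_card_sub_X (ZMod p)
  rw [ZMod.card p] at hprod
  rw [ascPochhammer_eq_prod_range, ← hprod, ← hneg]
  refine prod_nbij' (fun i => (i : ZMod p)) ZMod.val (fun _ _ => mem_univ _)
    (fun a _ => mem_range.2 a.val_lt) (fun i hi => ZMod.val_cast_of_lt (mem_range.1 hi))
    (fun a _ => ZMod.natCast_zmod_val a) (fun i _ => by simp)

section CharP

variable {R : Type*} [CommRing R] (p : ℕ) [Fact p.Prime] [CharP R p]

theorem ascPochhammer_eq_X_pow_sub_X_of_charP : ascPochhammer R p = X ^ p - X := by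
  simpa using congrArg (map (ZMod.castHom (dvd_refl p) R)) (ZMod.ascPochhammer_eq_X_pow_sub_X p)

theorem ascPochhammer_pred_comp_X_add_one :
    (ascPochhammer R (p - 1)).comp (X + 1) = X ^ (p - 1) - 1 := by
  have hp : p - 1 + 1 = p := Nat.sub_add_cancel (Fact.out : p.Prime).one_le
  apply isRegular_X.left
  change X * _ = X * _
  rw [← ascPochhammer_succ_left, hp, ascPochhammer_eq_X_pow_sub_X_of_charP, mul_sub, mul_one,
    ← pow_succ', hp]

theorem ascPochhammer_eval_add_one_mul_eval_sub {l : ℕ} (hl : 1 ≤ l) (hlp : l ≤ p) (x : R) :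
    (ascPochhammer R (p - l)).eval (x + 1) * (ascPochhammer R (l - 1)).eval (x - l + 1) =
      x ^ (p - 1) - 1 := by
  have hsplit := ascPochhammer_mul R (p - l) (l - 1)
  rw [show p - l + (l - 1) = p - 1 by omega] at hsplit
  have hpred := congrArg (eval x) (ascPochhammer_pred_comp_X_add_one (R := R) p)
  have hcast : ((p - l : ℕ) : R) = -l := by
    rw [Nat.cast_sub hlp, CharP.cast_eq_zero, zero_sub]
  have hsplit_eval := congrArg (eval (x + 1)) hsplit
  simp only [eval_comp, eval_mul, eval_add, eval_X, eval_one, eval_pow, eval_sub,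
    eval_natCast, hcast] at hsplit_eval hpred
  rw [← hpred, ← hsplit_eval, sub_eq_add_neg x, add_right_comm]

end CharP

theorem RatFunc.algebraMap_pow_sub_one_ne_zero {K : Type*} [Field K] {q : K[X]}
    (hq : q.eval 0 = 0) {n : ℕ} (hn : n ≠ 0) : algebraMap K[X] (RatFunc K) q ^ n - 1 ≠ 0 := by
  rw [← map_pow, ← map_one (algebraMap K[X] (RatFunc K)), ← map_sub]
  refine RatFunc.algebraMap_ne_zero fun h => ?_
  simpa [hq, hn] using congrArg (Polynomial.eval 0) h

theorem div_eq_mul_div_mul_mul_div {K : Type*} [Field K] (a c : K) {b d : K} (hb : b ≠ 0)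
    (hd : d ≠ 0) : a / c = a * b / (c * d) * (d / b) := by
  rw [div_mul_div_comm, mul_right_comm c, mul_div_mul_right _ _ hd, mul_div_mul_right _ _ hb]

/-- For a prime `p` and `1 ≤ l ≤ p-1`, in `𝔽_p(z)`:
`(z+1)_{p-l}/(2z+1)_{p-l} = ((z^{p-1}-1)/((2z)^{p-1}-1)) · (2z-l+1)_{l-1}/(z-l+1)_{l-1}`. -/
theorem stmt_6 (p l : ℕ) [Fact p.Prime] (hl : 1 ≤ l) (hlp : l ≤ p - 1) :
    (ascPochhammer (RatFunc (ZMod p)) (p - l)).eval (RatFunc.X + 1) /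
        (ascPochhammer (RatFunc (ZMod p)) (p - l)).eval (2 * RatFunc.X + 1) =
      ((RatFunc.X ^ (p - 1) - 1) / ((2 * RatFunc.X) ^ (p - 1) - 1)) *
        ((ascPochhammer (RatFunc (ZMod p)) (l - 1)).eval
            (2 * RatFunc.X - (l : RatFunc (ZMod p)) + 1) /
          (ascPochhammer (RatFunc (ZMod p)) (l - 1)).eval
            (RatFunc.X - (l : RatFunc (ZMod p)) + 1)) := by
  have hlp' : l ≤ p := hlp.trans (Nat.sub_le p 1)
  have hp : p - 1 ≠ 0 := by have := (Fact.out : p.Prime).two_le; omega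
  have hX : (RatFunc.X : RatFunc (ZMod p)) ^ (p - 1) - 1 ≠ 0 := by
    rw [← RatFunc.algebraMap_X]
    exact RatFunc.algebraMap_pow_sub_one_ne_zero (by simp) hp
  have h2X : (2 * RatFunc.X : RatFunc (ZMod p)) ^ (p - 1) - 1 ≠ 0 := by
    rw [← RatFunc.algebraMap_X, ← map_ofNat (algebraMap (ZMod p)[X] (RatFunc (ZMod p))) 2,
      ← map_mul]
    exact RatFunc.algebraMap_pow_sub_one_ne_zero (by simp) hp
  rw [← ascPochhammer_eval_add_one_mul_eval_sub p hl hlp' RatFunc.X] at hX ⊢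
  rw [← ascPochhammer_eval_add_one_mul_eval_sub p hl hlp' (2 * RatFunc.X)] at h2X ⊢
  exact div_eq_mul_div_mul_mul_div _ _ (right_ne_zero_of_mul hX) (right_ne_zero_of_mul h2X)
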